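/- Suppose a₁, …, a_n, s ∈ W are such that Σ_{i=1}^n ev_{b₁,b₂}(a_i) = ev_{b₁,b₂}(s) for all real numbers b₁, b₂. Then for every c ∈ W and all real b₁, b₂: Σ_{i=1}^n ev_{b₁,b₂}(c * a_i) = ev_{b₁,b₂}(c * s). -/

import Mathlib

/-- Exponents of the indeterminates `b₁` (resp. `b₂`) appearing in a formal weight:
`e` for exponent zero (factor `1`), `pl` for the factor `bᵢ`, `mi` for the factor `1 - bᵢ`. -/
inductive Eps : Type
  | e : Eps
  | pl : Eps
  | mi : Eps
deriving DecidableEq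

instance : Fintype Eps :=
  ⟨{Eps.e, Eps.pl, Eps.mi}, by intro x; cases x <;> simp⟩

/-- The 10-element set of formal weights: `none` represents `0`, and `some (ε₁, ε₂)`
represents the monomial `f₁(ε₁) f₂(ε₂)`. -/
abbrev Wt : Type := Option (Eps × Eps)

/-- The join operation on exponents: `a ∨ a = a`, `e ∨ a = a ∨ e = a`, and the
clash `{+, −}` gives `none` (i.e. the factor `0`). -/
def Eps.vee : Eps → Eps → Option Eps
  | .e, a => some a
  | a, .e => some a
  | .pl, .pl => some .pl
  | .mi, .mi => some .mi
  | .pl, .mi => none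
  | .mi, .pl => none

/-- The Boolean-type product `*` on the formal weight set `Wt`. -/
def wmul : Wt → Wt → Wt
  | none, _ => none
  | _, none => none
  | some (a₁, a₂), some (c₁, c₂) =>
    match a₁.vee c₁, a₂.vee c₂ with
    | some x, some y => some (x, y)
    | _, _ => none

/-- Evaluation of an exponent of `b₁`: `f₁(e) = 1`, `f₁(+) = b₁`, `f₁(−) = 1 - b₁`. -/
def f1 (b1 : ℝ) : Eps → ℝ
  | .e => 1
  | .pl => b1
  | .mi => 1 - b1

/-- Evaluation of an exponent of `b₂`: `f₂(e) = 1`, `f₂(+) = b₂`, `f₂(−) = 1 - b₂`. -/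
def f2 (b2 : ℝ) : Eps → ℝ
  | .e => 1
  | .pl => b2
  | .mi => 1 - b2

/-- The evaluation map `ev_{b₁,b₂} : W → ℝ`. -/
def ev (b1 b2 : ℝ) : Wt → ℝ
  | none => 0
  | some (x, y) => f1 b1 x * f2 b2 y


/-
Multiplying by `c = (c₁, c₂)` and then evaluating at `(b₁, b₂)` is the same as evaluating `c`
at `(b₁, b₂)` times evaluating the other factor at a point where `bᵢ` is pinned to `1` when
`cᵢ = +` and to `0` when `cᵢ = −`: the join rules are exactly `bᵢ · bᵢ ↦ bᵢ · 1` and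
`bᵢ · (1 - bᵢ) ↦ bᵢ · 0`. Hence `w ↦ ev (c * w)` is a scalar times an evaluation, and the
hypothesis, which holds at every point, transfers through the finite sum.
-/

def pinAt (b : ℝ) : Eps → ℝ
  | .e => b
  | .pl => 1
  | .mi => 0

theorem ev_wmul_some (b1 b2 : ℝ) (c1 c2 : Eps) (w : Wt) :
    ev b1 b2 (wmul (some (c1, c2)) w)
      = ev b1 b2 (some (c1, c2)) * ev (pinAt b1 c1) (pinAt b2 c2) w := by
  rcases w with _ | ⟨x, y⟩
  · simp [wmul, ev]
  · cases c1 <;> cases c2 <;> cases x <;> cases y <;>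
      simp [wmul, ev, Eps.vee, f1, f2, pinAt] <;> ring

/-- Distributivity of the Boolean-type product with respect to evaluation: if the
evaluations of `a₁, …, a_n ∈ W` sum to the evaluation of `s ∈ W` for all real `b₁, b₂`,
then the same holds after multiplying every term by any `c ∈ W`. -/
theorem wmul_distrib (n : ℕ) (a : Fin n → Wt) (s : Wt)
    (h : ∀ b1 b2 : ℝ, ∑ i, ev b1 b2 (a i) = ev b1 b2 s) :
    ∀ c : Wt, ∀ b1 b2 : ℝ, ∑ i, ev b1 b2 (wmul c (a i)) = ev b1 b2 (wmul c s) := by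
  rintro (_ | ⟨c1, c2⟩) b1 b2
  · simp [wmul, ev]
  · simp only [ev_wmul_some, ← Finset.mul_sum, h]
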